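/- arXiv:2102.07609 — 2 statements merged into one kernel-verified Lean document; each statement's English description precedes it below -/
import Mathlib

section
/- Let (M,ρ) be a pseudometric space, X a two-dimensional real Banach space, and F a set-valued mapping assigning to each x ∈ M a nonempty compact convex subset F(x) ⊆ X. Assume the finiteness hypothesis: for every subset M' ⊆ M with at most 4 points there is a selection f : M' → X with ‖f(x) − f(y)‖ ≤ ρ(x,y) on M'. Let λ1 ≥ 1 satisfy the Lipschitz extension property: every map g from any subset M' ⊆ M into X with ‖g(x)−g(y)‖ ≤ ρ(x,y) on M' extends to ĝ : M → X with ‖ĝ(x)−ĝ(y)‖ ≤ λ1·ρ(x,y) on M. Let λ2 ≥ 3λ1. Then for every x ∈ M the second balanced refinement F²(x) is nonempty. -/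
/-!
Write `K = λ₁` and `F¹` for the first refinement. Combining the finiteness hypothesis with the
extension property gives, on any four points, a selection of `F` that is `K`-Lipschitz on all of
`M`. Helly's theorem in `X` then makes every `F¹ y` nonempty, and Helly's theorem in `X × X` gives
`a ∈ F¹ y`, `b ∈ F¹ y'` with `‖a - b‖ ≤ K ρ(y, y')`. For `F²(x)` Helly reduces to three points
`z₁, z₂, z₃` with `z₁` closest to `x`. Since `F¹ z₁ = ⋂ w, F w + K ρ(z₁, w) B`, a third use of Helly
reduces it further to a single `w`: for a close pair `b₂ ∈ F¹ z₂`, `b₃ ∈ F¹ z₃`, a convex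
combination of points of `F w + K ρ(z₁, w) B` near `b₂` and near `b₃` lies within `3 K ρ(x, z₂)`
of `b₂` and within `3 K ρ(x, z₃)` of `b₃`.
-/

open Pointwise Metric

theorem exists_convex_weight_of_le {d₁ d₂ d₃ : ℝ} (h₁ : 0 ≤ d₁) (h₁₂ : d₁ ≤ d₂) (h₁₃ : d₁ ≤ d₃) :
    ∃ τ ∈ Set.Icc (0 : ℝ) 1, 2 * τ * d₃ ≤ 2 * d₂ - d₁ ∧ 2 * (1 - τ) * d₂ ≤ 2 * d₃ - d₁ := by
  by_cases h₃ : 2 * d₃ ≤ 2 * d₂ - d₁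
  · exact ⟨1, by simp, by linarith, by linarith⟩
  by_cases h₂ : 2 * d₂ ≤ 2 * d₃ - d₁
  · exact ⟨0, by simp, by linarith, by linarith⟩
  have hd₃ : 0 < d₃ := by linarith
  set τ := (2 * d₂ - d₁) / (2 * d₃)
  have hτ : τ * (2 * d₃) = 2 * d₂ - d₁ := div_mul_cancel₀ _ (by positivity)
  refine ⟨τ, ⟨div_nonneg (by linarith) (by linarith),
    (div_le_one (by positivity)).mpr (by linarith)⟩, by linarith, le_of_mul_le_mul_left ?_ hd₃⟩
  nlinarith [sq_nonneg (d₂ - d₃), mul_le_mul_of_nonneg_left h₁₂ h₁,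
    mul_le_mul_of_nonneg_left h₁₃ h₁]

section NormedSpace

variable {X : Type*} [NormedAddCommGroup X]

theorem mem_add_closedBall_zero_iff {s : Set X} {r : ℝ} {v : X} :
    v ∈ s + closedBall (0 : X) r ↔ ∃ u ∈ s, ‖v - u‖ ≤ r := by
  constructor
  · rintro ⟨u, hu, w, hw, rfl⟩
    exact ⟨u, hu, by simpa using hw⟩
  · rintro ⟨u, hu, h⟩
    exact ⟨u, hu, v - u, by simpa using h, add_sub_cancel u v⟩

variable [NormedSpace ℝ X]

theorem add_closedBall_zero_add [ProperSpace X] (s : Set X) {r e : ℝ} (hr : 0 ≤ r) (he : 0 ≤ e) :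
    s + closedBall (0 : X) (r + e) = s + closedBall 0 r + closedBall 0 e := by
  rw [add_assoc, closedBall_add_closedBall hr he, add_zero]

theorem Convex.exists_mem_norm_sub_le_three_mul {C : Set X} (hC : Convex ℝ C) {q₂ q₃ b₂ b₃ : X}
    (hq₂ : q₂ ∈ C) (hq₃ : q₃ ∈ C) {d₁ d₂ d₃ : ℝ} (h₁ : 0 ≤ d₁) (h₁₂ : d₁ ≤ d₂) (h₁₃ : d₁ ≤ d₃)
    (h₂ : ‖q₂ - b₂‖ ≤ d₁ + d₂) (h₃ : ‖q₃ - b₃‖ ≤ d₁ + d₃) (h₂₃ : ‖b₂ - b₃‖ ≤ d₂ + d₃) :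
    ∃ q ∈ C, ‖q - b₂‖ ≤ 3 * d₂ ∧ ‖q - b₃‖ ≤ 3 * d₃ := by
  obtain ⟨τ, ⟨hτ₀, hτ₁⟩, hw₂, hw₃⟩ := exists_convex_weight_of_le h₁ h₁₂ h₁₃
  have hcomb (b : X) : ‖(1 - τ) • q₂ + τ • q₃ - b‖ ≤ (1 - τ) * ‖q₂ - b‖ + τ * ‖q₃ - b‖ := by
    simpa only [dist_eq_norm, smul_eq_mul] using
      (convexOn_dist b convex_univ).2 trivial trivial (by linarith) hτ₀ (by ring)
  have h₃₂ : ‖q₃ - b₂‖ ≤ d₁ + d₃ + (d₂ + d₃) :=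
    (norm_sub_le_norm_sub_add_norm_sub q₃ b₃ b₂).trans (add_le_add h₃ (norm_sub_rev b₃ b₂ ▸ h₂₃))
  have h₂₃' : ‖q₂ - b₃‖ ≤ d₁ + d₂ + (d₂ + d₃) :=
    (norm_sub_le_norm_sub_add_norm_sub q₂ b₂ b₃).trans (add_le_add h₂ h₂₃)
  refine ⟨(1 - τ) • q₂ + τ • q₃, hC hq₂ hq₃ (by linarith) hτ₀ (by ring), ?_, ?_⟩
  · nlinarith [hcomb b₂, mul_le_mul_of_nonneg_left h₂ (sub_nonneg.mpr hτ₁),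
      mul_le_mul_of_nonneg_left h₃₂ hτ₀]
  · nlinarith [hcomb b₃, mul_le_mul_of_nonneg_left h₂₃' (sub_nonneg.mpr hτ₁),
      mul_le_mul_of_nonneg_left h₃ hτ₀]

end NormedSpace

theorem Finset.exists_subset_insert_insert_singleton {α : Type*} [DecidableEq α] [Nonempty α]
    {s : Finset α} (hs : s.card ≤ 3) : ∃ a b c, s ⊆ {a, b, c} := by
  interval_cases h : s.card
  · obtain ⟨a⟩ := ‹Nonempty α›
    exact ⟨a, a, a, by simp [Finset.card_eq_zero.mp h]⟩
  · obtain ⟨a, rfl⟩ := Finset.card_eq_one.mp h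
    exact ⟨a, a, a, by simp⟩
  · obtain ⟨a, b, -, rfl⟩ := Finset.card_eq_two.mp h
    exact ⟨a, a, b, by simp⟩
  · obtain ⟨a, b, c, -, -, -, rfl⟩ := Finset.card_eq_three.mp h
    exact ⟨a, b, c, subset_rfl⟩

section Helly

variable {𝕜 E ι : Type*} [Field 𝕜] [LinearOrder 𝕜] [IsStrictOrderedRing 𝕜] [AddCommGroup E]
  [Module 𝕜 E] [FiniteDimensional 𝕜 E] [TopologicalSpace E]

theorem Convex.helly_theorem_of_isCompact {F : ι → Set E} {i₀ : ι}
    (h_convex : ∀ i, Convex 𝕜 (F i)) (h_compact : IsCompact (F i₀))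
    (h_closed : ∀ i, IsClosed (F i))
    (h_inter : ∀ I : Finset ι, I.card ≤ Module.finrank 𝕜 E + 1 → (⋂ i ∈ I, F i).Nonempty) :
    (⋂ i, F i).Nonempty := by
  classical
  rw [← Set.inter_eq_right.mpr (Set.iInter_subset F i₀)]
  refine h_compact.inter_iInter_nonempty F h_closed fun u => ?_
  simpa using Convex.helly_theorem' (s := insert i₀ u) (fun i _ => h_convex i)
    fun J _ hJ => h_inter J hJ

variable [T2Space E]

theorem Convex.helly_theorem_inter_inter_compact {A B : Set E} {C : ι → Set E}
    (hA : Convex 𝕜 A) (hB : Convex 𝕜 B) (hC : ∀ i, Convex 𝕜 (C i))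
    (hA' : IsCompact A) (hB' : IsCompact B) (hC' : ∀ i, IsCompact (C i))
    (hAC : (A ∩ ⋂ i, C i).Nonempty) (hBC : (B ∩ ⋂ i, C i).Nonempty)
    (hABC : ∀ I : Finset ι, I.card + 1 ≤ Module.finrank 𝕜 E → (A ∩ B ∩ ⋂ i ∈ I, C i).Nonempty) :
    (A ∩ B ∩ ⋂ i, C i).Nonempty := by
  classical
  let G : ι ⊕ Bool → Set E := Sum.elim C fun b => bif b then A else B
  have hG : (⋂ j, G j).Nonempty := by
    refine Convex.helly_theorem_compact' (𝕜 := 𝕜) (by rintro (i | _ | _); exacts [hC i, hB, hA])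
      (by rintro (i | _ | _); exacts [hC' i, hB', hA']) fun I hI => ?_
    by_cases hAI : Sum.inr true ∈ I
    · by_cases hBI : Sum.inr false ∈ I
      · have hright : I.toRight = Finset.univ := by
          ext (_ | _) <;> simpa using ‹_›
        have hleft : I.toLeft.card + 1 ≤ Module.finrank 𝕜 E := by
          have := I.card_toLeft_add_card_toRight
          rw [hright, Finset.card_univ, Fintype.card_bool] at this
          omega
        obtain ⟨p, ⟨hpA, hpB⟩, hpC⟩ := hABC I.toLeft hleft
        refine ⟨p, Set.mem_iInter₂.mpr ?_⟩
        rintro (i | _ | _) hi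
        exacts [Set.mem_iInter₂.mp hpC i (Finset.mem_toLeft.mpr hi), hpB, hpA]
      · obtain ⟨p, hpA, hpC⟩ := hAC
        refine ⟨p, Set.mem_iInter₂.mpr ?_⟩
        rintro (i | _ | _) hi
        exacts [Set.mem_iInter.mp hpC i, absurd hi hBI, hpA]
    · obtain ⟨p, hpB, hpC⟩ := hBC
      refine ⟨p, Set.mem_iInter₂.mpr ?_⟩
      rintro (i | _ | _) hi
      exacts [Set.mem_iInter.mp hpC i, hpB, absurd hi hAI]
  obtain ⟨p, hp⟩ := hG
  exact ⟨p, ⟨Set.mem_iInter.mp hp (.inr true), Set.mem_iInter.mp hp (.inr false)⟩,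
    Set.mem_iInter.mpr fun i => Set.mem_iInter.mp hp (.inl i)⟩

theorem Convex.helly_theorem_compact_of_finrank_eq_two (hE : Module.finrank 𝕜 E = 2)
    {K : ι → Set E} (h_convex : ∀ i, Convex 𝕜 (K i)) (h_compact : ∀ i, IsCompact (K i))
    (h_inter : ∀ a b c, ∃ p, p ∈ K a ∧ p ∈ K b ∧ p ∈ K c) :
    (⋂ i, K i).Nonempty := by
  classical
  rcases isEmpty_or_nonempty ι with _ | _
  · simp
  refine Convex.helly_theorem_compact' h_convex h_compact fun I hI => ?_
  obtain ⟨a, b, c, habc⟩ := Finset.exists_subset_insert_insert_singleton (hE ▸ hI)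
  obtain ⟨p, ha, hb, hc⟩ := h_inter a b c
  refine ⟨p, Set.mem_iInter₂.mpr fun i hi => ?_⟩
  have := habc hi
  simp only [Finset.mem_insert, Finset.mem_singleton] at this
  rcases this with rfl | rfl | rfl <;> assumption

end Helly

section Refinement

variable {M : Type*} [PseudoMetricSpace M] {X : Type*} [NormedAddCommGroup X]

def balancedRefinement (F : M → Set X) (K : ℝ) (x : M) : Set X :=
  ⋂ z, F z + closedBall (0 : X) (K * dist x z)

def HasLipschitzSelections (F : M → Set X) (K : ℝ) (n : ℕ) : Prop :=
  ∀ W : Finset M, W.card ≤ n →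
    ∃ g : M → X, (∀ w ∈ W, g w ∈ F w) ∧ ∀ a b, ‖g a - g b‖ ≤ K * dist a b

variable {F : M → Set X} {K : ℝ}

theorem balancedRefinement_subset (x z : M) :
    balancedRefinement F K x ⊆ F z + closedBall 0 (K * dist x z) :=
  Set.iInter_subset _ z

theorem balancedRefinement_mono {K K' : ℝ} (h : K ≤ K') (x : M) :
    balancedRefinement F K x ⊆ balancedRefinement F K' x :=
  Set.iInter_mono fun _ => Set.add_subset_add_left
    (closedBall_subset_closedBall (mul_le_mul_of_nonneg_right h dist_nonneg))

theorem isCompact_balancedRefinement [ProperSpace X] (hF : ∀ z, IsCompact (F z)) (x : M) :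
    IsCompact (balancedRefinement F K x) :=
  ((hF x).add (isCompact_closedBall 0 _)).of_isClosed_subset
    (isClosed_iInter fun z => ((hF z).add (isCompact_closedBall 0 _)).isClosed)
    (balancedRefinement_subset x x)

theorem hasLipschitzSelections_of_extension {n : ℕ}
    (hfin : ∀ W : Finset M, W.card ≤ n → ∃ f : M → X, (∀ x ∈ W, f x ∈ F x) ∧
      ∀ x ∈ W, ∀ y ∈ W, ‖f x - f y‖ ≤ dist x y)
    (hext : ∀ (M' : Set M) (g : M → X), (∀ x ∈ M', ∀ y ∈ M', ‖g x - g y‖ ≤ dist x y) →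
      ∃ g' : M → X, (∀ x ∈ M', g' x = g x) ∧ ∀ x y, ‖g' x - g' y‖ ≤ K * dist x y) :
    HasLipschitzSelections F K n := by
  intro W hW
  obtain ⟨f, hfF, hf⟩ := hfin W hW
  obtain ⟨g, hgf, hg⟩ := hext W f hf
  exact ⟨g, fun w hw => hgf w hw ▸ hfF w hw, hg⟩

theorem HasLipschitzSelections.mono {m n : ℕ} (h : HasLipschitzSelections F K n) (hmn : m ≤ n) :
    HasLipschitzSelections F K m :=
  fun W hW => h W (hW.trans hmn)

variable [NormedSpace ℝ X]

theorem balancedRefinement_subset_add_closedBall_add [ProperSpace X] (hK : 0 ≤ K) (y w : M)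
    {z : M} : balancedRefinement F K z ⊆
      F w + closedBall 0 (K * dist y w) + closedBall 0 (K * dist y z) := by
  rw [← add_closedBall_zero_add _ (by positivity) (by positivity), ← mul_add]
  refine (balancedRefinement_subset z w).trans (Set.add_subset_add_left
    (closedBall_subset_closedBall (mul_le_mul_of_nonneg_left ?_ hK)))
  linarith [dist_triangle_left z w y]

theorem convex_balancedRefinement (hF : ∀ z, Convex ℝ (F z)) (x : M) :
    Convex ℝ (balancedRefinement F K x) :=
  convex_iInter fun z => (hF z).add (convex_closedBall 0 _)

variable [FiniteDimensional ℝ X]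

theorem balancedRefinement_nonempty (hcp : ∀ z, IsCompact (F z)) (hcv : ∀ z, Convex ℝ (F z))
    (hsel : HasLipschitzSelections F K (Module.finrank ℝ X + 1)) (x : M) :
    (balancedRefinement F K x).Nonempty := by
  refine Convex.helly_theorem_compact' (fun z => (hcv z).add (convex_closedBall 0 _))
    (fun z => (hcp z).add (isCompact_closedBall 0 _)) fun I hI => ?_
  obtain ⟨g, hgI, hg⟩ := hsel I hI
  exact ⟨g x, Set.mem_iInter₂.mpr fun w hw =>
    mem_add_closedBall_zero_iff.mpr ⟨g w, hgI w hw, hg x w⟩⟩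

theorem exists_mem_balancedRefinement_norm_sub_le (hcp : ∀ z, IsCompact (F z))
    (hcv : ∀ z, Convex ℝ (F z)) (hsel : HasLipschitzSelections F K (2 * Module.finrank ℝ X))
    (hne : ∀ y, (balancedRefinement F K y).Nonempty) (y y' : M) :
    ∃ a ∈ balancedRefinement F K y, ∃ b ∈ balancedRefinement F K y', ‖a - b‖ ≤ K * dist y y' := by
  classical
  let T : Option M → Set (X × X) := fun o => o.elim
    ((fun p => p.1 - p.2) ⁻¹' closedBall 0 (K * dist y y'))
    fun w => (F w + closedBall 0 (K * dist y w)) ×ˢ (F w + closedBall 0 (K * dist y' w))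
  have hT : (⋂ o, T o).Nonempty := by
    refine Convex.helly_theorem_of_isCompact (𝕜 := ℝ) (i₀ := some y) ?_
      (((hcp y).add (isCompact_closedBall 0 _)).prod ((hcp y).add (isCompact_closedBall 0 _)))
      ?_ fun I hI => ?_
    · rintro (_ | w)
      · exact (convex_closedBall 0 _).linear_preimage (LinearMap.fst ℝ X X - LinearMap.snd ℝ X X)
      · exact ((hcv w).add (convex_closedBall 0 _)).prod ((hcv w).add (convex_closedBall 0 _))
    · rintro (_ | w)
      · exact isClosed_closedBall.preimage (by fun_prop)
      · exact ((hcp w).add (isCompact_closedBall 0 _)).isClosed.prod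
          ((hcp w).add (isCompact_closedBall 0 _)).isClosed
    rw [Module.finrank_prod] at hI
    -- a subfamily containing the constraint on `a - b` involves at most `2 dim X` points `w`
    by_cases hD : none ∈ I
    · obtain ⟨g, hgI, hg⟩ := hsel I.eraseNone (by rw [Finset.card_eraseNone_of_mem hD]; omega)
      refine ⟨(g y, g y'), Set.mem_iInter₂.mpr ?_⟩
      rintro (_ | w) hw
      · exact mem_closedBall_zero_iff.mpr (hg y y')
      · have hw' := Finset.mem_eraseNone.mpr hw
        exact ⟨mem_add_closedBall_zero_iff.mpr ⟨g w, hgI w hw', hg y w⟩,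
          mem_add_closedBall_zero_iff.mpr ⟨g w, hgI w hw', hg y' w⟩⟩
    · obtain ⟨a, ha⟩ := hne y
      obtain ⟨b, hb⟩ := hne y'
      refine ⟨(a, b), Set.mem_iInter₂.mpr ?_⟩
      rintro (_ | w) hw
      · exact absurd hw hD
      · exact ⟨balancedRefinement_subset y w ha, balancedRefinement_subset y' w hb⟩
  obtain ⟨p, hp⟩ := hT
  rw [Set.iInter_option] at hp
  exact ⟨p.1, Set.mem_iInter.mpr fun w => (Set.mem_iInter.mp hp.2 w).1,
    p.2, Set.mem_iInter.mpr fun w => (Set.mem_iInter.mp hp.2 w).2, mem_closedBall_zero_iff.mp hp.1⟩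

theorem exists_mem_add_closedBall_norm_sub_le_three_mul (hK : 0 ≤ K) (hcv : ∀ z, Convex ℝ (F z))
    {x z₁ z₂ z₃ : M} (h₁₂ : dist x z₁ ≤ dist x z₂) (h₁₃ : dist x z₁ ≤ dist x z₃) {b₂ b₃ : X}
    (hb₂ : b₂ ∈ balancedRefinement F K z₂) (hb₃ : b₃ ∈ balancedRefinement F K z₃)
    (hb₂₃ : ‖b₂ - b₃‖ ≤ K * dist z₂ z₃) (w : M) :
    ∃ q ∈ F w + closedBall 0 (K * dist z₁ w),
      ‖q - b₂‖ ≤ 3 * (K * dist x z₂) ∧ ‖q - b₃‖ ≤ 3 * (K * dist x z₃) := by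
  have hdist (y z : M) : K * dist y z ≤ K * dist x y + K * dist x z := by
    rw [← mul_add]
    exact mul_le_mul_of_nonneg_left (dist_triangle_left y z x) hK
  obtain ⟨q₂, hq₂, h₂⟩ := mem_add_closedBall_zero_iff.mp
    (balancedRefinement_subset_add_closedBall_add hK z₁ w hb₂)
  obtain ⟨q₃, hq₃, h₃⟩ := mem_add_closedBall_zero_iff.mp
    (balancedRefinement_subset_add_closedBall_add hK z₁ w hb₃)
  exact ((hcv w).add (convex_closedBall 0 _)).exists_mem_norm_sub_le_three_mul hq₂ hq₃
    (by positivity) (by gcongr) (by gcongr) (norm_sub_rev q₂ b₂ ▸ h₂.trans (hdist z₁ z₂))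
    (norm_sub_rev q₃ b₃ ▸ h₃.trans (hdist z₁ z₃)) (hb₂₃.trans (hdist z₂ z₃))

theorem exists_mem_balancedRefinement_of_dist_le (hdim : Module.finrank ℝ X = 2) (hK : 0 ≤ K)
    (hcp : ∀ z, IsCompact (F z)) (hcv : ∀ z, Convex ℝ (F z))
    (hpair : ∀ y y', ∃ a ∈ balancedRefinement F K y, ∃ b ∈ balancedRefinement F K y',
      ‖a - b‖ ≤ K * dist y y') {x z₁ z₂ z₃ : M}
    (h₁₂ : dist x z₁ ≤ dist x z₂) (h₁₃ : dist x z₁ ≤ dist x z₃) :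
    ∃ p ∈ balancedRefinement F K z₁,
      p ∈ balancedRefinement F K z₂ + closedBall 0 (3 * K * dist x z₂) ∧
      p ∈ balancedRefinement F K z₃ + closedBall 0 (3 * K * dist x z₃) := by
  have hnear {z : M} (h : dist x z₁ ≤ dist x z) :
      ((balancedRefinement F K z + closedBall 0 (3 * K * dist x z)) ∩
        balancedRefinement F K z₁).Nonempty := by
    obtain ⟨a, ha, b, hb, hab⟩ := hpair z₁ z
    refine ⟨a, mem_add_closedBall_zero_iff.mpr ⟨b, hb, hab.trans ?_⟩, ha⟩
    nlinarith [mul_le_mul_of_nonneg_left (dist_triangle_left z₁ z x) hK,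
      dist_nonneg (x := x) (y := z₁)]
  obtain ⟨b₂, hb₂, b₃, hb₃, hb₂₃⟩ := hpair z₂ z₃
  obtain ⟨p, ⟨hp₂, hp₃⟩, hp₁⟩ := Convex.helly_theorem_inter_inter_compact
    (C := fun w => F w + closedBall 0 (K * dist z₁ w))
    ((convex_balancedRefinement hcv z₂).add (convex_closedBall 0 _))
    ((convex_balancedRefinement hcv z₃).add (convex_closedBall 0 _))
    (fun w => (hcv w).add (convex_closedBall 0 _))
    ((isCompact_balancedRefinement hcp z₂).add (isCompact_closedBall 0 _))
    ((isCompact_balancedRefinement hcp z₃).add (isCompact_closedBall 0 _))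
    (fun w => (hcp w).add (isCompact_closedBall 0 _))
    (hnear h₁₂) (hnear h₁₃)
    fun I hI => by
      have : Nonempty M := ⟨x⟩
      obtain ⟨w, hw⟩ := Finset.card_le_one_iff_subset_singleton.mp (by omega : I.card ≤ 1)
      obtain ⟨q, hq, hq₂, hq₃⟩ :=
        exists_mem_add_closedBall_norm_sub_le_three_mul hK hcv h₁₂ h₁₃ hb₂ hb₃ hb₂₃ w
      refine ⟨q, ⟨mem_add_closedBall_zero_iff.mpr ⟨b₂, hb₂, by rwa [mul_assoc]⟩,
        mem_add_closedBall_zero_iff.mpr ⟨b₃, hb₃, by rwa [mul_assoc]⟩⟩,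
        Set.mem_iInter₂.mpr fun i hi => ?_⟩
      rwa [Finset.mem_singleton.mp (hw hi)]
  exact ⟨p, hp₁, hp₂, hp₃⟩

theorem exists_mem_inter_three_balancedRefinement_add_closedBall (hdim : Module.finrank ℝ X = 2)
    (hK : 0 ≤ K) (hcp : ∀ z, IsCompact (F z)) (hcv : ∀ z, Convex ℝ (F z))
    (hpair : ∀ y y', ∃ a ∈ balancedRefinement F K y, ∃ b ∈ balancedRefinement F K y',
      ‖a - b‖ ≤ K * dist y y') (x : M) :
    let S := fun z => balancedRefinement F K z + closedBall 0 (3 * K * dist x z)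
    ∀ a b c, ∃ p, p ∈ S a ∧ p ∈ S b ∧ p ∈ S c := by
  intro S
  have sorted {z₁ z₂ z₃ : M} (h₁₂ : dist x z₁ ≤ dist x z₂) (h₁₃ : dist x z₁ ≤ dist x z₃) :
      ∃ p, p ∈ S z₁ ∧ p ∈ S z₂ ∧ p ∈ S z₃ := by
    obtain ⟨p, hp₁, hp₂, hp₃⟩ :=
      exists_mem_balancedRefinement_of_dist_le hdim hK hcp hcv hpair h₁₂ h₁₃
    refine ⟨p, mem_add_closedBall_zero_iff.mpr ⟨p, hp₁, ?_⟩, hp₂, hp₃⟩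
    rw [sub_self, norm_zero]
    positivity
  intro a b c
  rcases le_total (dist x a) (dist x b) with hab | hba
  · rcases le_total (dist x a) (dist x c) with hac | hca
    · exact sorted hab hac
    · obtain ⟨p, hc, ha, hb⟩ := sorted hca (hca.trans hab)
      exact ⟨p, ha, hb, hc⟩
  · rcases le_total (dist x b) (dist x c) with hbc | hcb
    · obtain ⟨p, hb, ha, hc⟩ := sorted hba hbc
      exact ⟨p, ha, hb, hc⟩
    · obtain ⟨p, hc, ha, hb⟩ := sorted (hcb.trans hba) hcb
      exact ⟨p, ha, hb, hc⟩

theorem balancedRefinement_balancedRefinement_nonempty (hdim : Module.finrank ℝ X = 2)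
    (hK : 0 ≤ K) (hcp : ∀ z, IsCompact (F z)) (hcv : ∀ z, Convex ℝ (F z))
    (hsel : HasLipschitzSelections F K 4) (x : M) :
    (balancedRefinement (balancedRefinement F K) (3 * K) x).Nonempty := by
  have hne := balancedRefinement_nonempty hcp hcv (hsel.mono (by omega))
  have hpair := exists_mem_balancedRefinement_norm_sub_le hcp hcv (by rwa [hdim]) hne
  exact Convex.helly_theorem_compact_of_finrank_eq_two hdim
    (fun z => (convex_balancedRefinement hcv z).add (convex_closedBall 0 _))
    (fun z => (isCompact_balancedRefinement hcp z).add (isCompact_closedBall 0 _))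
    (exists_mem_inter_three_balancedRefinement_add_closedBall hdim hK hcp hcv hpair x)

end Refinement

theorem second_refinement_nonempty_two_dim_general
    {M : Type*} (ρ : M → M → ℝ)
    (hρ_refl : ∀ x, ρ x x = 0)
    (hρ_symm : ∀ x y, ρ x y = ρ y x)
    (hρ_tri : ∀ x y z, ρ x z ≤ ρ x y + ρ y z)
    {X : Type*} [NormedAddCommGroup X] [NormedSpace ℝ X]
    (hdim : Module.finrank ℝ X = 2)
    (F : M → Set X)
    (hFcp : ∀ x, IsCompact (F x))
    (hFcv : ∀ x, Convex ℝ (F x))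
    -- finiteness hypothesis: selections on subsets of at most 4 points
    (hfin : ∀ M' : Finset M, M'.card ≤ 4 →
      ∃ f : M → X, (∀ x ∈ M', f x ∈ F x) ∧
        ∀ x ∈ M', ∀ y ∈ M', ‖f x - f y‖ ≤ ρ x y)
    (lam1 lam2 : ℝ) (hlam1 : 1 ≤ lam1)
    -- Lipschitz extension property of `lam1`
    (hext : ∀ (M' : Set M) (g : M → X),
      (∀ x ∈ M', ∀ y ∈ M', ‖g x - g y‖ ≤ ρ x y) →
      ∃ g' : M → X, (∀ x ∈ M', g' x = g x) ∧ ∀ x y, ‖g' x - g' y‖ ≤ lam1 * ρ x y)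
    (hlam2 : 3 * lam1 ≤ lam2)
    (F1 F2 : M → Set X)
    (hF1 : ∀ x, F1 x = ⋂ z, F z + closedBall (0 : X) (lam1 * ρ x z))
    (hF2 : ∀ x, F2 x = ⋂ z, F1 z + closedBall (0 : X) (lam2 * ρ x z)) :
    ∀ x, (F2 x).Nonempty := by
  let _ : PseudoMetricSpace M :=
    { dist := ρ, dist_self := hρ_refl, dist_comm := hρ_symm, dist_triangle := hρ_tri }
  have : FiniteDimensional ℝ X := .of_finrank_eq_succ hdim
  obtain rfl : F1 = balancedRefinement F lam1 := funext hF1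
  obtain rfl : F2 = balancedRefinement (balancedRefinement F lam1) lam2 := funext hF2
  intro x
  exact (balancedRefinement_balancedRefinement_nonempty hdim (by linarith) hFcp hFcv
    (hasLipschitzSelections_of_extension hfin hext) x).mono (balancedRefinement_mono hlam2 x)

theorem second_refinement_nonempty_two_dim
    {M : Type*} (ρ : M → M → ℝ)
    (hρ_refl : ∀ x, ρ x x = 0)
    (hρ_symm : ∀ x y, ρ x y = ρ y x)
    (hρ_tri : ∀ x y z, ρ x z ≤ ρ x y + ρ y z)
    {X : Type*} [NormedAddCommGroup X] [NormedSpace ℝ X]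
    (hdim : Module.finrank ℝ X = 2)
    (F : M → Set X)
    (hFne : ∀ x, (F x).Nonempty)
    (hFcp : ∀ x, IsCompact (F x))
    (hFcv : ∀ x, Convex ℝ (F x))
    -- finiteness hypothesis: selections on subsets of at most 4 points
    (hfin : ∀ M' : Finset M, M'.card ≤ 4 →
      ∃ f : M → X, (∀ x ∈ M', f x ∈ F x) ∧
        ∀ x ∈ M', ∀ y ∈ M', ‖f x - f y‖ ≤ ρ x y)
    (lam1 lam2 : ℝ) (hlam1 : 1 ≤ lam1)
    -- Lipschitz extension property of `lam1`
    (hext : ∀ (M' : Set M) (g : M → X),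
      (∀ x ∈ M', ∀ y ∈ M', ‖g x - g y‖ ≤ ρ x y) →
      ∃ g' : M → X, (∀ x ∈ M', g' x = g x) ∧ ∀ x y, ‖g' x - g' y‖ ≤ lam1 * ρ x y)
    (hlam2 : 3 * lam1 ≤ lam2)
    (F1 F2 : M → Set X)
    (hF1 : ∀ x, F1 x = ⋂ z, F z + closedBall (0 : X) (lam1 * ρ x z))
    (hF2 : ∀ x, F2 x = ⋂ z, F1 z + closedBall (0 : X) (lam2 * ρ x z)) :
    ∀ x, (F2 x).Nonempty :=
  second_refinement_nonempty_two_dim_general ρ hρ_refl hρ_symm hρ_tri hdim F hFcp hFcv hfin lam1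
    lam2 hlam1 hext hlam2 F1 F2 hF1 hF2
end

section
/- Equip ℝ² with the sup norm ‖(x1,x2)‖ = max{|x1|, |x2|}, so that the unit ball is the square Q0 = [−1,1]². Let K1, K2 ⊆ ℝ² be nonempty compact convex sets with K1 ∩ K2 ≠ ∅, let τ ≥ 0, and set Q = [−τ,τ]². Then (K1 ∩ K2) + Q = (K1 + Q) ∩ (K2 + Q) ∩ H[(K1 ∩ K2) + Q], where for a nonempty bounded convex closed set S ⊆ ℝ², H[S] = (S + Ox1) ∩ (S + Ox2) is its rectangular hull, Ox1 and Ox2 being the two coordinate axes (the lines {(t,0) : t ∈ ℝ} and {(0,t) : t ∈ ℝ}). -/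
/-!
A point `x` lies in `S + Q` iff the square `x + Q` meets `S`, this square is the intersection of
the horizontal and the vertical strip of half-width `τ` through `x`, and `x` lies in the rectangular
hull of `S + Q` iff `S` meets both strips. The hypotheses therefore say that any three of the four
convex sets `K1`, `K2` and the two strips have a common point, and Helly's theorem in the plane
yields a point common to all four.
-/

open Pointwise Metric

open Module in
theorem Convex.inter_inter_inter_nonempty_of_finrank_le_two {𝕜 E : Type*} [Field 𝕜]
    [LinearOrder 𝕜] [IsStrictOrderedRing 𝕜] [AddCommGroup E] [Module 𝕜 E] [FiniteDimensional 𝕜 E]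
    (hE : finrank 𝕜 E ≤ 2) {A B C D : Set E}
    (hA : Convex 𝕜 A) (hB : Convex 𝕜 B) (hC : Convex 𝕜 C) (hD : Convex 𝕜 D)
    (hABC : (A ∩ B ∩ C).Nonempty) (hABD : (A ∩ B ∩ D).Nonempty)
    (hACD : (A ∩ C ∩ D).Nonempty) (hBCD : (B ∩ C ∩ D).Nonempty) :
    (A ∩ B ∩ C ∩ D).Nonempty := by
  let F := ![A, B, C, D]
  have hF : ∀ i, Convex 𝕜 (F i) := by
    intro i
    fin_cases i <;> assumption
  have hF_erase : ∀ j, (⋂ i ∈ Finset.univ.erase j, F i).Nonempty := by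
    intro j
    fin_cases j
    · simpa [F, Set.Nonempty, Fin.forall_fin_succ, and_assoc] using hBCD
    · simpa [F, Set.Nonempty, Fin.forall_fin_succ, and_assoc] using hACD
    · simpa [F, Set.Nonempty, Fin.forall_fin_succ, and_assoc] using hABD
    · simpa [F, Set.Nonempty, Fin.forall_fin_succ, and_assoc] using hABC
  have h := Convex.helly_theorem' (s := Finset.univ) (fun i _ => hF i) fun I _ hI => by
    obtain ⟨j, hj⟩ : ∃ j, j ∉ I := by
      by_contra! hI_univ
      have := Finset.card_le_card (show Finset.univ ⊆ I from fun j _ => hI_univ j)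
      simp at this
      omega
    refine (hF_erase j).mono (Set.biInter_mono (fun i hi => ?_) fun _ _ => le_rfl)
    exact Finset.mem_erase.2 ⟨ne_of_mem_of_not_mem hi hj, Finset.mem_univ _⟩
  simpa [F, Fin.forall_fin_succ, Set.Nonempty, and_assoc] using h

theorem mem_add_closedBall_zero_iff_s16 {E : Type*} [SeminormedAddCommGroup E] {s : Set E} {x : E}
    {r : ℝ} : x ∈ s + closedBall 0 r ↔ (s ∩ closedBall x r).Nonempty := by
  constructor
  · rintro ⟨y, hy, q, hq, rfl⟩
    exact ⟨y, hy, by simpa [dist_eq_norm] using hq⟩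
  · rintro ⟨y, hy, hyx⟩
    exact ⟨y, hy, x - y, by rwa [mem_closedBall_zero_iff, ← dist_eq_norm, dist_comm],
      add_sub_cancel y x⟩

theorem inter_eval_preimage_closedBall_nonempty_of_mem_add_closedBall_add {ι E : Type*}
    [Fintype ι] [SeminormedAddCommGroup E] {s : Set (ι → E)} {x : ι → E} {r : ℝ} {i : ι}
    (hx : x ∈ s + closedBall 0 r + {v | v i = 0}) :
    (s ∩ Function.eval i ⁻¹' closedBall (x i) r).Nonempty := by
  obtain ⟨_, ⟨y, hy, q, hq, rfl⟩, v, hv : v i = 0, rfl⟩ := hx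
  refine ⟨y, hy, ?_⟩
  simpa [dist_eq_norm', hv] using (norm_le_pi_norm q i).trans (mem_closedBall_zero_iff.1 hq)

theorem closedBall_fin_two {E : Type*} [PseudoMetricSpace E] (x : Fin 2 → E) (r : ℝ) :
    closedBall x r =
      Function.eval 0 ⁻¹' closedBall (x 0) r ∩ Function.eval 1 ⁻¹' closedBall (x 1) r := by
  ext y
  simp [dist_pi_le_iff', Fin.forall_fin_two]

theorem rectangular_hull_intersection_linf_general
    (K1 K2 : Set (Fin 2 → ℝ))
    (hK1cv : Convex ℝ K1)
    (hK2cv : Convex ℝ K2)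
    (τ : ℝ) :
    (K1 ∩ K2) + closedBall (0 : Fin 2 → ℝ) τ =
      (K1 + closedBall (0 : Fin 2 → ℝ) τ) ∩
        (K2 + closedBall (0 : Fin 2 → ℝ) τ) ∩
        ((((K1 ∩ K2) + closedBall (0 : Fin 2 → ℝ) τ) + {v : Fin 2 → ℝ | v 1 = 0}) ∩
          (((K1 ∩ K2) + closedBall (0 : Fin 2 → ℝ) τ) + {v : Fin 2 → ℝ | v 0 = 0})) := by
  refine subset_antisymm (Set.subset_inter
    (Set.subset_inter (Set.add_subset_add_right Set.inter_subset_left)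
      (Set.add_subset_add_right Set.inter_subset_right))
    (Set.subset_inter (Set.subset_add_left _ rfl) (Set.subset_add_left _ rfl))) ?_
  rintro x ⟨⟨hx1, hx2⟩, hxH, hxV⟩
  rw [mem_add_closedBall_zero_iff_s16] at hx1 hx2 ⊢
  rw [closedBall_fin_two, ← Set.inter_assoc] at hx1 hx2 ⊢
  have hstrip (i : Fin 2) : Convex ℝ (Function.eval i ⁻¹' closedBall (x i) τ) :=
    (convex_closedBall (x i) τ).linear_preimage (LinearMap.proj i : (Fin 2 → ℝ) →ₗ[ℝ] ℝ)
  exact Convex.inter_inter_inter_nonempty_of_finrank_le_two (by simp) hK1cv hK2cv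
    (hstrip 0) (hstrip 1)
    (inter_eval_preimage_closedBall_nonempty_of_mem_add_closedBall_add hxV)
    (inter_eval_preimage_closedBall_nonempty_of_mem_add_closedBall_add hxH) hx1 hx2

theorem rectangular_hull_intersection_linf
    (K1 K2 : Set (Fin 2 → ℝ))
    (hK1ne : K1.Nonempty) (hK1cp : IsCompact K1) (hK1cv : Convex ℝ K1)
    (hK2ne : K2.Nonempty) (hK2cp : IsCompact K2) (hK2cv : Convex ℝ K2)
    (hint : (K1 ∩ K2).Nonempty)
    (τ : ℝ) (hτ : 0 ≤ τ) :
    (K1 ∩ K2) + closedBall (0 : Fin 2 → ℝ) τ =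
      (K1 + closedBall (0 : Fin 2 → ℝ) τ) ∩
        (K2 + closedBall (0 : Fin 2 → ℝ) τ) ∩
        ((((K1 ∩ K2) + closedBall (0 : Fin 2 → ℝ) τ) + {v : Fin 2 → ℝ | v 1 = 0}) ∩
          (((K1 ∩ K2) + closedBall (0 : Fin 2 → ℝ) τ) + {v : Fin 2 → ℝ | v 0 = 0})) :=
  rectangular_hull_intersection_linf_general K1 K2 hK1cv hK2cv τ
end
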